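/- Let T_1, T_2 : ∏_{n=1}^N Fin I_n → ℝ be tensors in tensor train format with cores T_1^(n) and T_2^(n). Then the slice-wise Kronecker products C^(n)[x_n] := T_1^(n)[x_n] ⊗ T_2^(n)[x_n] form a tensor train representing the Hadamard (element-wise) product: for every x, the single entry of C^(1)[x_1] · ... · C^(N)[x_N] equals T_1[x] · T_2[x]. -/

import Mathlib

open Finset

/-- Ordered matrix product `A 0 * A 1 * ... * A (N-1)` of a chain of matrices indexed by
arbitrary finite types `ρ 0, ρ 1, ..., ρ N`. -/
def matChainT {N : ℕ} (ρ : Fin (N+1) → Type) [∀ i, Fintype (ρ i)] [DecidableEq (ρ 0)]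
    (A : ∀ n : Fin N, Matrix (ρ n.castSucc) (ρ n.succ) ℝ) :
    Matrix (ρ 0) (ρ (Fin.last N)) ℝ :=
  Fin.induction (motive := fun i => Matrix (ρ 0) (ρ i) ℝ)
    1 (fun n M => M * A n) (Fin.last N)

/-- The matrix product `T^(1)[x_1] * ... * T^(N)[x_N]` of tensor-train cores whose rank
index sets are arbitrary finite types.  When `ρ 0` and `ρ N` are singletons, the single
entry of this `1 × 1` matrix is the value of the represented tensor at `x`. -/
def ttProdT {N : ℕ} {I : Fin N → ℕ} (ρ : Fin (N+1) → Type)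
    [∀ i, Fintype (ρ i)] [DecidableEq (ρ 0)]
    (T : ∀ n : Fin N, Fin (I n) → Matrix (ρ n.castSucc) (ρ n.succ) ℝ)
    (x : ∀ n : Fin N, Fin (I n)) : Matrix (ρ 0) (ρ (Fin.last N)) ℝ :=
  matChainT ρ (fun n => T n (x n))

open Kronecker

section Kronecker

variable {N : ℕ} (ρ σ : Fin (N+1) → Type) [∀ i, Fintype (ρ i)] [∀ i, Fintype (σ i)]
  [DecidableEq (ρ 0)] [DecidableEq (σ 0)]

theorem matChainT_kronecker
    (A : ∀ n : Fin N, Matrix (ρ n.castSucc) (ρ n.succ) ℝ)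
    (B : ∀ n : Fin N, Matrix (σ n.castSucc) (σ n.succ) ℝ) :
    matChainT (fun i => ρ i × σ i) (fun n => A n ⊗ₖ B n) = matChainT ρ A ⊗ₖ matChainT σ B := by
  unfold matChainT
  induction Fin.last N using Fin.induction with
  | zero => simp only [Fin.induction_zero, Matrix.one_kronecker_one]
  | succ n ih => rw [Fin.induction_succ, Fin.induction_succ, Fin.induction_succ, ih,
      Matrix.mul_kronecker_mul]

theorem ttProdT_kronecker_apply {I : Fin N → ℕ}
    (T1 : ∀ n : Fin N, Fin (I n) → Matrix (ρ n.castSucc) (ρ n.succ) ℝ)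
    (T2 : ∀ n : Fin N, Fin (I n) → Matrix (σ n.castSucc) (σ n.succ) ℝ)
    (x : ∀ n : Fin N, Fin (I n)) (i : ρ 0 × σ 0) (j : ρ (Fin.last N) × σ (Fin.last N)) :
    ttProdT (fun i => ρ i × σ i) (fun n xn => T1 n xn ⊗ₖ T2 n xn) x i j
      = ttProdT ρ T1 x i.1 j.1 * ttProdT σ T2 x i.2 j.2 := by
  rw [ttProdT, matChainT_kronecker]
  rfl

end Kronecker

theorem tt_hadamard_product_general
    {N : ℕ} {I : Fin N → ℕ}
    (R P : Fin (N+1) → ℕ)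
    (T1 : ∀ n : Fin N, Fin (I n) → Matrix (Fin (R n.castSucc)) (Fin (R n.succ)) ℝ)
    (T2 : ∀ n : Fin N, Fin (I n) → Matrix (Fin (P n.castSucc)) (Fin (P n.succ)) ℝ)
    (f1 f2 : ((n : Fin N) → Fin (I n)) → ℝ)
    (hf1 : ∀ x (i : Fin (R 0)) (j : Fin (R (Fin.last N))),
      f1 x = ttProdT (fun i => Fin (R i)) T1 x i j)
    (hf2 : ∀ x (i : Fin (P 0)) (j : Fin (P (Fin.last N))),
      f2 x = ttProdT (fun i => Fin (P i)) T2 x i j)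
    (x : (n : Fin N) → Fin (I n))
    (i : Fin (R 0) × Fin (P 0)) (j : Fin (R (Fin.last N)) × Fin (P (Fin.last N))) :
    ttProdT (fun i => Fin (R i) × Fin (P i))
      (fun n xn => Matrix.kroneckerMap (· * ·) (T1 n xn) (T2 n xn)) x i j
    = f1 x * f2 x := by
  rw [ttProdT_kronecker_apply, ← hf1 x i.1 j.1, ← hf2 x i.2 j.2]

/-- the slice-wise Kronecker products
`C^(n)[x_n] := T1^(n)[x_n] ⊗ T2^(n)[x_n]` form a tensor train representing the Hadamard
(element-wise) product of the tensors represented by `T1` and `T2`. -/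
theorem tt_hadamard_product
    {N : ℕ} (hN : 1 ≤ N) {I : Fin N → ℕ}
    (R P : Fin (N+1) → ℕ)
    (hR0 : R 0 = 1) (hRN : R (Fin.last N) = 1)
    (hP0 : P 0 = 1) (hPN : P (Fin.last N) = 1)
    (T1 : ∀ n : Fin N, Fin (I n) → Matrix (Fin (R n.castSucc)) (Fin (R n.succ)) ℝ)
    (T2 : ∀ n : Fin N, Fin (I n) → Matrix (Fin (P n.castSucc)) (Fin (P n.succ)) ℝ)
    (f1 f2 : ((n : Fin N) → Fin (I n)) → ℝ)
    (hf1 : ∀ x (i : Fin (R 0)) (j : Fin (R (Fin.last N))),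
      f1 x = ttProdT (fun i => Fin (R i)) T1 x i j)
    (hf2 : ∀ x (i : Fin (P 0)) (j : Fin (P (Fin.last N))),
      f2 x = ttProdT (fun i => Fin (P i)) T2 x i j)
    (x : (n : Fin N) → Fin (I n))
    (i : Fin (R 0) × Fin (P 0)) (j : Fin (R (Fin.last N)) × Fin (P (Fin.last N))) :
    ttProdT (fun i => Fin (R i) × Fin (P i))
      (fun n xn => Matrix.kroneckerMap (· * ·) (T1 n xn) (T2 n xn)) x i j
    = f1 x * f2 x :=
  tt_hadamard_product_general R P T1 T2 f1 f2 hf1 hf2 x i j
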